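/- arXiv:1201.0484 — 4 statements merged into one kernel-verified Lean document; each statement's English description precedes it below -/
import Mathlib

section
/- Let q be a prime power. Every non-empty set without tangents in PG(2,q) has at least q+2 points. -/
/-!
`PG(2,F)`: points are the 1-dimensional subspaces of `F^3` (modelled as the
projectivization of `Fin 3 → F`), lines are the 2-dimensional subspaces.
-/

variable {F : Type*} [Field F]

/-- The points of `PG(2,F)`: 1-dimensional subspaces of `F^3`. -/
abbrev PGPoint (F : Type*) [Field F] := Projectivization F (Fin 3 → F)

/-- A line of `PG(2,F)` is a 2-dimensional subspace of `F^3`. -/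
def IsProjLine (F : Type*) [Field F] (L : Submodule F (Fin 3 → F)) : Prop :=
  Module.finrank F L = 2

/-- The set of projective points lying on the subspace `L`. -/
def pointsOn (L : Submodule F (Fin 3 → F)) : Set (PGPoint F) :=
  {P | P.submodule ≤ L}

/-- `S` is a set without tangents: no line of `PG(2,F)` meets `S` in exactly one point. -/
def NoTangents (S : Set (PGPoint F)) : Prop :=
  ∀ L : Submodule F (Fin 3 → F), IsProjLine F L →
    ¬ (∃! P : PGPoint F, P ∈ S ∩ pointsOn L)

/-!
Fix `P ∈ S`. The lines through `P` are the preimages of the `q + 1` points of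
`ℙ(F³ ⧸ P) ≅ PG(1,q)`. None of them is a tangent, so each contains a point of `S` other than `P`;
hence projection from `P` maps `S \ {P}` onto `PG(1,q)`, and `|S| ≥ (q + 1) + 1`.
-/

open Module Submodule Projectivization
open scoped LinearAlgebra.Projectivization

namespace Projectivization

variable {K V : Type*} [Field K] [AddCommGroup V] [Module K V]

theorem mk_eq_of_mem_submodule {v : V} (hv : v ≠ 0) {x : ℙ K V} (h : v ∈ x.submodule) :
    mk K v hv = x := by
  induction x using ind with | h w hw =>
  obtain ⟨a, rfl⟩ := mem_span_singleton.1 h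
  exact (mk_eq_mk_iff' K _ w hv hw).2 ⟨a, rfl⟩

theorem rep_mem_submodule_iff {P Q : ℙ K V} : Q.rep ∈ P.submodule ↔ Q = P :=
  ⟨fun h => Q.mk_rep ▸ mk_eq_of_mem_submodule Q.rep_nonzero h,
    fun h => h ▸ Q.submodule_eq ▸ mem_span_singleton_self _⟩

noncomputable def projectFrom (P : ℙ K V) {Q : ℙ K V} (hQ : Q ≠ P) : ℙ K (V ⧸ P.submodule) :=
  mk K (P.submodule.mkQ Q.rep) <| by
    rwa [Ne, mkQ_apply, Quotient.mk_eq_zero, rep_mem_submodule_iff]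

/-- The lines through `P` are parametrized by the points of `ℙ(V ⧸ P)`. -/
def lineThrough (P : ℙ K V) (x : ℙ K (V ⧸ P.submodule)) : Submodule K V :=
  x.submodule.comap P.submodule.mkQ

theorem submodule_le_lineThrough (P : ℙ K V) (x : ℙ K (V ⧸ P.submodule)) :
    P.submodule ≤ lineThrough P x :=
  le_comap_mkQ _ _

theorem projectFrom_eq_of_le_lineThrough {P Q : ℙ K V} (hQ : Q ≠ P) {x : ℙ K (V ⧸ P.submodule)}
    (h : Q.submodule ≤ lineThrough P x) : projectFrom P hQ = x :=
  mk_eq_of_mem_submodule _ (h (Q.submodule_eq ▸ mem_span_singleton_self _))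

theorem finrank_lineThrough [FiniteDimensional K V] (P : ℙ K V) (x : ℙ K (V ⧸ P.submodule)) :
    finrank K (lineThrough P x) = 2 := by
  have e : ((V ⧸ P.submodule) ⧸ x.submodule) ≃ₗ[K] V ⧸ lineThrough P x := by
    rw [← map_comap_eq_of_surjective P.submodule.mkQ_surjective x.submodule]
    exact quotientQuotientEquivQuotient _ _ (submodule_le_lineThrough P x)
  have h1 := (lineThrough P x).finrank_quotient_add_finrank
  have h2 := x.submodule.finrank_quotient_add_finrank
  have h3 := P.submodule.finrank_quotient_add_finrank
  rw [← e.finrank_eq] at h1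
  rw [x.finrank_submodule] at h2
  rw [P.finrank_submodule] at h3
  omega

theorem card_add_one_le_ncard_of_forall_lineThrough {S : Set (ℙ K V)} (hS : S.Finite)
    {P : ℙ K V} (hP : P ∈ S)
    (h : ∀ x, ∃ Q ∈ S, Q.submodule ≤ lineThrough P x ∧ Q ≠ P) :
    Nat.card (ℙ K (V ⧸ P.submodule)) + 1 ≤ S.ncard := by
  have hsurj : Function.Surjective fun Q : ↥(S \ {P}) => projectFrom P Q.2.2 := by
    intro x
    obtain ⟨Q, hQS, hQx, hQP⟩ := h x
    exact ⟨⟨Q, hQS, hQP⟩, projectFrom_eq_of_le_lineThrough hQP hQx⟩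
  have : Finite ↥(S \ {P}) := (hS.sdiff (t := {P})).to_subtype
  have hcard := Nat.card_le_card_of_surjective _ hsurj
  rw [Nat.card_coe_set_eq, Set.ncard_sdiff_singleton_of_mem hP] at hcard
  have hpos := (Set.ncard_pos hS).2 ⟨P, hP⟩
  omega

end Projectivization

theorem NoTangents.exists_mem_pointsOn_ne {S : Set (PGPoint F)} (hS : NoTangents S)
    {L : Submodule F (Fin 3 → F)} (hL : IsProjLine F L) {P : PGPoint F} (hP : P ∈ S)
    (hPL : P ∈ pointsOn L) : ∃ Q ∈ S, Q ∈ pointsOn L ∧ Q ≠ P := by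
  by_contra! h
  exact hS L hL ⟨P, ⟨hP, hPL⟩, fun Q hQ => h Q hQ.1 hQ.2⟩

/-- every non-empty set without tangents in `PG(2,q)` has at least
`q + 2` points. -/
theorem stmt_0 [Fintype F] (q : ℕ) (hq : Fintype.card F = q)
    (S : Set (PGPoint F)) (hne : S.Nonempty) (hS : NoTangents S) :
    q + 2 ≤ S.ncard := by
  obtain ⟨P, hP⟩ := hne
  have hquot : finrank F ((Fin 3 → F) ⧸ P.submodule) = 2 := by
    rw [Submodule.finrank_quotient, P.finrank_submodule, finrank_fin_fun]
  have hlines : Nat.card (ℙ F ((Fin 3 → F) ⧸ P.submodule)) = q + 1 := by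
    rw [card_of_finrank_two F _ hquot, Nat.card_eq_fintype_card, hq]
  calc q + 2 = Nat.card (ℙ F ((Fin 3 → F) ⧸ P.submodule)) + 1 := by rw [hlines]
    _ ≤ S.ncard := card_add_one_le_ncard_of_forall_lineThrough S.toFinite hP fun x =>
      hS.exists_mem_pointsOn_ne (finrank_lineThrough P x) hP (submodule_le_lineThrough P x)
end

section
/- Let p be a prime and let S be a set without tangents in PG(2,p) with |S| ≤ 2p. If some line L of PG(2,p) contains exactly p points of S, then S is the trivial set without tangents, i.e. there exist two distinct lines L1, L2 such that S is the set of all points on L1 or L2 different from L1 ∩ L2. -/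
/-!
`PG(2,F)`: points are the 1-dimensional subspaces of `F^3` (modelled as the
projectivization of `Fin 3 → F`), lines are the 2-dimensional subspaces.
-/

variable {F : Type*} [Field F]

/-- The trivial set without tangents: all points on one of two distinct lines,
different from their intersection point. -/
def IsTrivialSWT (S : Set (PGPoint F)) : Prop :=
  ∃ L1 L2 : Submodule F (Fin 3 → F), IsProjLine F L1 ∧ IsProjLine F L2 ∧ L1 ≠ L2 ∧
    S = (pointsOn L1 ∪ pointsOn L2) \ (pointsOn L1 ∩ pointsOn L2)


/-!
Let `q = |F|`, so `|S ∩ L| = q` and `|S \ L| ≤ q`. Through a point `X ∈ S ∩ L` pass `q` lines other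
than `L`; none of them is a tangent, so each contains a point of `S \ L`. Hence `|S \ L| = q` and
each of these lines meets `S \ L` exactly once. Now if `Y ≠ W` lie in `S \ L`, the line `YW` meets
`L` in a point outside `S`, i.e. in the unique point `Q` of `L \ S`. So `S \ L` lies on the line
`YQ`, and counting shows that `S` consists of the points of `L ∪ YQ` other than `Q`.
-/

open Module Submodule Projectivization

variable {S : Set (PGPoint F)} {L L' N : Submodule F (Fin 3 → F)} {P Q X Y Z Z' : PGPoint F}

lemma mem_pointsOn_iff_rep_mem : P ∈ pointsOn L ↔ P.rep ∈ L := by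
  rw [pointsOn, Set.mem_ofPred_eq, submodule_eq, span_singleton_le_iff_mem]

lemma mk_mem_pointsOn_iff {v : Fin 3 → F} (hv : v ≠ 0) : mk F v hv ∈ pointsOn L ↔ v ∈ L := by
  rw [pointsOn, Set.mem_ofPred_eq, submodule_mk, span_singleton_le_iff_mem]

lemma isAtom_submodule (P : PGPoint F) : IsAtom P.submodule :=
  isAtom_iff_finrank_eq_one.mpr P.finrank_submodule

/-- A genuine line only when `P ≠ Q`. -/
def lineThrough (P Q : PGPoint F) : Submodule F (Fin 3 → F) := P.submodule ⊔ Q.submodule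

lemma isProjLine_lineThrough (h : P ≠ Q) : IsProjLine F (lineThrough P Q) := by
  have key := finrank_sup_add_finrank_inf_eq P.submodule Q.submodule
  rwa [((isAtom_submodule P).disjoint_of_ne (isAtom_submodule Q)
    (submodule_injective.ne h)).eq_bot, finrank_bot, P.finrank_submodule,
    Q.finrank_submodule] at key

lemma left_mem_pointsOn_lineThrough (P Q : PGPoint F) : P ∈ pointsOn (lineThrough P Q) :=
  show P.submodule ≤ _ from le_sup_left

lemma right_mem_pointsOn_lineThrough (P Q : PGPoint F) : Q ∈ pointsOn (lineThrough P Q) :=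
  show Q.submodule ≤ _ from le_sup_right

lemma eq_lineThrough (hL : IsProjLine F L) (hPQ : P ≠ Q) (hP : P ∈ pointsOn L)
    (hQ : Q ∈ pointsOn L) : L = lineThrough P Q :=
  (eq_of_le_of_finrank_eq (sup_le hP hQ) ((isProjLine_lineThrough hPQ).trans hL.symm)).symm

lemma ne_of_mem_pointsOn_of_not_mem (hP : P ∈ pointsOn L) (hP' : P ∉ pointsOn L') : L ≠ L' := by
  rintro rfl
  exact hP' hP

lemma eq_of_mem_pointsOn (hL : IsProjLine F L) (hL' : IsProjLine F L') (hPQ : P ≠ Q)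
    (hP : P ∈ pointsOn L ∩ pointsOn L') (hQ : Q ∈ pointsOn L ∩ pointsOn L') : L = L' := by
  rw [eq_lineThrough hL hPQ hP.1 hQ.1, eq_lineThrough hL' hPQ hP.2 hQ.2]

lemma eq_of_mem_pointsOn_inter (hL : IsProjLine F L) (hL' : IsProjLine F L') (hne : L ≠ L')
    (hP : P ∈ pointsOn L ∩ pointsOn L') (hQ : Q ∈ pointsOn L ∩ pointsOn L') : P = Q :=
  not_not.mp fun hPQ => hne (eq_of_mem_pointsOn hL hL' hPQ hP hQ)

lemma exists_mem_pointsOn_inter (hL : IsProjLine F L) (hL' : IsProjLine F L') :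
    ∃ P : PGPoint F, P ∈ pointsOn L ∩ pointsOn L' := by
  have key := finrank_sup_add_finrank_inf_eq L L'
  have hsup : finrank F (L ⊔ L' : Submodule F (Fin 3 → F)) ≤ 3 :=
    (finrank_le _).trans_eq (finrank_fin_fun F)
  have hinf : L ⊓ L' ≠ ⊥ := by
    intro hbot
    rw [hbot, finrank_bot, hL, hL'] at key
    omega
  obtain ⟨v, hv, hv0⟩ := exists_mem_ne_zero_of_ne_bot hinf
  exact ⟨mk F v hv0, (mk_mem_pointsOn_iff hv0).mpr hv.1, (mk_mem_pointsOn_iff hv0).mpr hv.2⟩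

lemma exists_isProjLine_not_mem_pointsOn (X : PGPoint F) :
    ∃ L : Submodule F (Fin 3 → F), IsProjLine F L ∧ X ∉ pointsOn L := by
  obtain ⟨W, hW⟩ := X.submodule.exists_isCompl
  have hdim := finrank_add_eq_of_isCompl hW
  rw [X.finrank_submodule, finrank_fin_fun] at hdim
  exact ⟨W, by unfold IsProjLine; omega,
    fun hX => (isAtom_submodule X).1 (hW.disjoint.eq_bot_of_le hX)⟩

lemma pointsOn_eq_range_map (L : Submodule F (Fin 3 → F)) :
    pointsOn L = Set.range (Projectivization.map L.subtype L.injective_subtype) := by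
  ext P
  constructor
  · intro hP
    refine ⟨mk F ⟨P.rep, mem_pointsOn_iff_rep_mem.mp hP⟩ ?_, ?_⟩
    · simpa using P.rep_nonzero
    · rw [map_mk]
      exact P.mk_rep
  · rintro ⟨P', rfl⟩
    induction P' using Projectivization.ind with
    | h v => exact (mk_mem_pointsOn_iff _).mpr v.2

lemma ncard_pointsOn [Finite F] (hL : IsProjLine F L) : (pointsOn L).ncard = Nat.card F + 1 := by
  rw [pointsOn_eq_range_map, Set.ncard_range_of_injective (map_injective _ _),
    card_of_finrank_two F L hL]

lemma exists_ne_mem_of_noTangents (hS : NoTangents S) (hL : IsProjLine F L)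
    (hP : P ∈ S ∩ pointsOn L) : ∃ Q ∈ S ∩ pointsOn L, Q ≠ P := by
  by_contra! h
  exact hS L hL ⟨P, hP, h⟩

/-- The central projection from `X` onto `L₀`; meaningful for `Z ≠ X` and `X ∉ L₀`. -/
noncomputable def centralProj (X : PGPoint F) (L₀ : Submodule F (Fin 3 → F)) (Z : PGPoint F) :
    PGPoint F :=
  Classical.epsilon fun Y => Y ∈ pointsOn (lineThrough X Z) ∩ pointsOn L₀

section CentralProjection

variable {L₀ : Submodule F (Fin 3 → F)} {P₀ : PGPoint F}

lemma centralProj_mem (hL₀ : IsProjLine F L₀) (hXZ : X ≠ Z) :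
    centralProj X L₀ Z ∈ pointsOn (lineThrough X Z) ∩ pointsOn L₀ :=
  Classical.epsilon_spec (exists_mem_pointsOn_inter (isProjLine_lineThrough hXZ) hL₀)

lemma centralProj_eq (hL₀ : IsProjLine F L₀) (hXL₀ : X ∉ pointsOn L₀) (hN : IsProjLine F N)
    (hXN : X ∈ pointsOn N) (hZN : Z ∈ pointsOn N) (hXZ : X ≠ Z)
    (hY : Y ∈ pointsOn N ∩ pointsOn L₀) : centralProj X L₀ Z = Y := by
  obtain rfl := eq_lineThrough hN hXZ hXN hZN
  exact eq_of_mem_pointsOn_inter hN hL₀ (ne_of_mem_pointsOn_of_not_mem hXN hXL₀)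
    (centralProj_mem hL₀ hXZ) hY

variable (hL : IsProjLine F L) (hL₀ : IsProjLine F L₀) (hXL₀ : X ∉ pointsOn L₀)
  (hP₀ : P₀ ∈ pointsOn L ∩ pointsOn L₀)
include hL hL₀ hXL₀ hP₀

lemma mapsTo_centralProj (hXL : X ∈ pointsOn L) :
    Set.MapsTo (centralProj X L₀) (pointsOn L)ᶜ (pointsOn L₀ \ {P₀}) := by
  intro Z hZL
  have hXZ : X ≠ Z := ne_of_mem_of_not_mem hXL hZL
  obtain ⟨hXZ_mem, hL₀_mem⟩ := centralProj_mem hL₀ hXZ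
  refine ⟨hL₀_mem, fun hP₀_eq => hZL ?_⟩
  rw [Set.mem_singleton_iff] at hP₀_eq
  subst hP₀_eq
  rw [eq_of_mem_pointsOn hL (isProjLine_lineThrough hXZ) (ne_of_mem_of_not_mem hL₀_mem hXL₀).symm
    ⟨hXL, left_mem_pointsOn_lineThrough X Z⟩ ⟨hP₀.1, hXZ_mem⟩]
  exact right_mem_pointsOn_lineThrough X Z

/-- The line `XY` is not a tangent, so it carries a second point of `S`, which cannot lie on `L`. -/
lemma surjOn_centralProj (hS : NoTangents S) (hX : X ∈ S ∩ pointsOn L) :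
    Set.SurjOn (centralProj X L₀) (S \ pointsOn L) (pointsOn L₀ \ {P₀}) := by
  rintro Y ⟨hYL₀, hYP₀⟩
  have hXY : X ≠ Y := (ne_of_mem_of_not_mem hYL₀ hXL₀).symm
  have hN := isProjLine_lineThrough hXY
  obtain ⟨Z, ⟨hZS, hZN⟩, hZX⟩ :=
    exists_ne_mem_of_noTangents hS hN ⟨hX.1, left_mem_pointsOn_lineThrough X Y⟩
  have hZL : Z ∉ pointsOn L := by
    intro hZL
    have hLN := eq_of_mem_pointsOn hL hN hZX ⟨hZL, hZN⟩ ⟨hX.2, left_mem_pointsOn_lineThrough X Y⟩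
    exact hYP₀ (eq_of_mem_pointsOn_inter hL hL₀ (ne_of_mem_pointsOn_of_not_mem hX.2 hXL₀)
      ⟨hLN ▸ right_mem_pointsOn_lineThrough X Y, hYL₀⟩ hP₀)
  exact ⟨Z, ⟨hZS, hZL⟩, centralProj_eq hL₀ hXL₀ hN (left_mem_pointsOn_lineThrough X Y) hZN
    hZX.symm ⟨right_mem_pointsOn_lineThrough X Y, hYL₀⟩⟩

lemma bijOn_centralProj [Finite F] (hS : NoTangents S) (hX : X ∈ S ∩ pointsOn L)
    (hle : (S \ pointsOn L).ncard ≤ Nat.card F) :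
    Set.BijOn (centralProj X L₀) (S \ pointsOn L) (pointsOn L₀ \ {P₀}) := by
  have hmaps : Set.MapsTo (centralProj X L₀) (S \ pointsOn L) (pointsOn L₀ \ {P₀}) :=
    (mapsTo_centralProj hL hL₀ hXL₀ hP₀ hX.2).mono_left fun _ hZ => hZ.2
  have hsurj := surjOn_centralProj hL hL₀ hXL₀ hP₀ hS hX
  have hcard : (S \ pointsOn L).ncard ≤ (pointsOn L₀ \ {P₀}).ncard := by
    rwa [Set.ncard_sdiff_singleton_of_mem hP₀.2, ncard_pointsOn hL₀, Nat.add_sub_cancel]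
  refine ⟨hmaps, fun Z hZ Z' hZ' h => ?_, hsurj⟩
  refine Set.inj_on_of_surj_on_of_ncard_le (fun Z _ => centralProj X L₀ Z)
    (fun _ hZ => hmaps hZ) (fun Y hY => ?_) hcard hZ hZ' h
  obtain ⟨W, hW, rfl⟩ := hsurj hY
  exact ⟨W, hW, rfl⟩

end CentralProjection

section NoTangents

variable [Finite F] (hS : NoTangents S) (hL : IsProjLine F L)
  (hle : (S \ pointsOn L).ncard ≤ Nat.card F)
include hS hL hle

lemma ncard_diff_pointsOn_eq (hX : X ∈ S ∩ pointsOn L) :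
    (S \ pointsOn L).ncard = Nat.card F := by
  obtain ⟨L₀, hL₀, hXL₀⟩ := exists_isProjLine_not_mem_pointsOn X
  obtain ⟨P₀, hP₀⟩ := exists_mem_pointsOn_inter hL hL₀
  rw [(bijOn_centralProj hL hL₀ hXL₀ hP₀ hS hX hle).ncard_eq,
    Set.ncard_sdiff_singleton_of_mem hP₀.2, ncard_pointsOn hL₀, Nat.add_sub_cancel]

lemma eq_of_mem_diff_pointsOn (hX : X ∈ S ∩ pointsOn L) (hN : IsProjLine F N)
    (hXN : X ∈ pointsOn N) (hZ : Z ∈ (S \ pointsOn L) ∩ pointsOn N)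
    (hZ' : Z' ∈ (S \ pointsOn L) ∩ pointsOn N) : Z = Z' := by
  obtain ⟨L₀, hL₀, hXL₀⟩ := exists_isProjLine_not_mem_pointsOn X
  obtain ⟨P₀, hP₀⟩ := exists_mem_pointsOn_inter hL hL₀
  obtain ⟨Y, hY⟩ := exists_mem_pointsOn_inter hN hL₀
  refine (bijOn_centralProj hL hL₀ hXL₀ hP₀ hS hX hle).injOn hZ.1 hZ'.1 ?_
  rw [centralProj_eq hL₀ hXL₀ hN hXN hZ.2 (ne_of_mem_of_not_mem hX.2 hZ.1.2) hY,
    centralProj_eq hL₀ hXL₀ hN hXN hZ'.2 (ne_of_mem_of_not_mem hX.2 hZ'.1.2) hY]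

/-- A line joining two points of `S \ L` meets `L` outside `S`, hence in `Q`. -/
lemma diff_pointsOn_subset_lineThrough (hQ : pointsOn L \ S = {Q}) (hY : Y ∈ S \ pointsOn L) :
    S \ pointsOn L ⊆ pointsOn (lineThrough Y Q) := by
  intro W hW
  rcases eq_or_ne Y W with rfl | hYW
  · exact left_mem_pointsOn_lineThrough Y Q
  have hN := isProjLine_lineThrough hYW
  obtain ⟨R, hRN, hRL⟩ := exists_mem_pointsOn_inter hN hL
  have hRS : R ∉ S := fun hRS => hYW (eq_of_mem_diff_pointsOn hS hL hle ⟨hRS, hRL⟩ hN hRN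
    ⟨hY, left_mem_pointsOn_lineThrough Y W⟩ ⟨hW, right_mem_pointsOn_lineThrough Y W⟩)
  have hRQ : R = Q := by
    rw [← Set.mem_singleton_iff, ← hQ]
    exact ⟨hRL, hRS⟩
  subst hRQ
  rw [← eq_lineThrough hN (ne_of_mem_of_not_mem hRL hY.2).symm
    (left_mem_pointsOn_lineThrough Y W) hRN]
  exact right_mem_pointsOn_lineThrough Y W

end NoTangents

lemma isTrivialSWT_of_eq (hL : IsProjLine F L) (hL' : IsProjLine F L') (hne : L ≠ L')
    (hQ : Q ∈ pointsOn L ∩ pointsOn L') (hS : S = (pointsOn L ∪ pointsOn L') \ {Q}) :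
    IsTrivialSWT S := by
  refine ⟨L, L', hL, hL', hne, ?_⟩
  rw [hS, Set.eq_singleton_iff_unique_mem.mpr
    ⟨hQ, fun P hP => eq_of_mem_pointsOn_inter hL hL' hne hP hQ⟩]

theorem stmt_5_general [Fintype F] (p : ℕ) (hcard : Fintype.card F = p)
    (S : Set (PGPoint F)) (hS : NoTangents S) (hsize : S.ncard ≤ 2 * p)
    (L : Submodule F (Fin 3 → F)) (hL : IsProjLine F L)
    (hLS : (S ∩ pointsOn L).ncard = p) :
    IsTrivialSWT S := by
  rw [← Nat.card_eq_fintype_card] at hcard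
  subst hcard
  have hq : 0 < Nat.card F := Nat.card_pos
  have hle : (S \ pointsOn L).ncard ≤ Nat.card F := by
    have := Set.ncard_inter_add_ncard_sdiff_eq_ncard S (pointsOn L)
    omega
  obtain ⟨Q, hQ⟩ : ∃ Q, pointsOn L \ S = {Q} := by
    rw [← Set.ncard_eq_one, ← Set.sdiff_inter_self_eq_sdiff,
      Set.ncard_sdiff Set.inter_subset_right, ncard_pointsOn hL, hLS, Nat.add_sub_cancel_left]
  obtain ⟨X, hX⟩ := Set.nonempty_of_ncard_ne_zero (hLS ▸ hq.ne')
  have hT := ncard_diff_pointsOn_eq hS hL hle hX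
  obtain ⟨Y, hY⟩ := Set.nonempty_of_ncard_ne_zero (hT ▸ hq.ne')
  have hQL : Q ∈ pointsOn L \ S := hQ ▸ rfl
  have hYQ : Y ≠ Q := (ne_of_mem_of_not_mem hQL.1 hY.2).symm
  have hM := isProjLine_lineThrough hYQ
  have hTM : S \ pointsOn L = pointsOn (lineThrough Y Q) \ {Q} := by
    refine Set.eq_of_subset_of_ncard_le (fun W hW => ⟨diff_pointsOn_subset_lineThrough hS hL hle
      hQ hY hW, ne_of_mem_of_not_mem hW.1 hQL.2⟩) ?_
    rw [Set.ncard_sdiff_singleton_of_mem (right_mem_pointsOn_lineThrough Y Q), ncard_pointsOn hM,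
      hT, Nat.add_sub_cancel]
  have hSL : S ∩ pointsOn L = pointsOn L \ {Q} := by
    rw [← hQ, Set.sdiff_sdiff_right_self, Set.inter_comm]
  refine isTrivialSWT_of_eq hL hM
    (ne_of_mem_pointsOn_of_not_mem (left_mem_pointsOn_lineThrough Y Q) hY.2).symm
    ⟨hQL.1, right_mem_pointsOn_lineThrough Y Q⟩ ?_
  rw [Set.union_sdiff_distrib, ← hSL, ← hTM, Set.inter_union_sdiff]

/-- a set without tangents of size at most `2p` in `PG(2,p)` having
a line with exactly `p` of its points is trivial. -/
theorem stmt_5 [Fintype F] (p : ℕ) (hp : p.Prime) (hcard : Fintype.card F = p)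
    (S : Set (PGPoint F)) (hS : NoTangents S) (hsize : S.ncard ≤ 2 * p)
    (L : Submodule F (Fin 3 → F)) (hL : IsProjLine F L)
    (hLS : (S ∩ pointsOn L).ncard = p) :
    IsTrivialSWT S :=
  stmt_5_general p hcard S hS hsize L hL hLS
end

section
/- Every set without tangents of size 6 in PG(2,3) is the trivial set without tangents, i.e. there exist two distinct lines L1, L2 of PG(2,3) such that the set equals the set of all points on L1 or L2 different from L1 ∩ L2. -/
/-!
`PG(2,F)`: points are the 1-dimensional subspaces of `F^3` (modelled as the
projectivization of `Fin 3 → F`), lines are the 2-dimensional subspaces.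
-/

variable {F : Type*} [Field F]

/-!
Let `S` be a set of six points of `PG(2,3)` without tangents and `p ∈ S`. The four lines
through `p` partition the five other points of `S`, and each of them contains at least one,
so exactly one line through `p` meets `S` in three points. Take this 3-secant `l₁` of `p`
and the 3-secant `l₂` of a point of `S` off `l₁`: uniqueness makes `S ∩ l₁` and `S ∩ l₂`
disjoint, hence they exhaust `S` and `l₁ ∩ l₂ ∉ S`. Since every line has four points,
`S = (l₁ ∪ l₂) \ (l₁ ∩ l₂)`.
-/

open Module
open scoped LinearAlgebra.Projectivization

namespace Submodule

variable {K V : Type*} [DivisionRing K] [AddCommGroup V] [Module K V] [FiniteDimensional K V]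

theorem finrank_inf_lt_of_ne {A B : Submodule K V} (hAB : A ≠ B)
    (h : finrank K A = finrank K B) : finrank K ↥(A ⊓ B) < finrank K A := by
  refine finrank_lt_finrank_of_lt (lt_of_le_of_ne inf_le_left fun hA => hAB ?_)
  exact eq_of_le_of_finrank_eq (inf_eq_left.1 hA) h

theorem finrank_inf_eq_one_of_finrank_eq_two {A B : Submodule K V} (hV : finrank K V = 3)
    (hA : finrank K A = 2) (hB : finrank K B = 2) (hAB : A ≠ B) :
    finrank K ↥(A ⊓ B) = 1 := by
  have hlt := finrank_inf_lt_of_ne hAB (hA.trans hB.symm)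
  have hsum := finrank_sup_add_finrank_inf_eq A B
  have hle := (A ⊔ B).finrank_le
  omega

end Submodule

namespace Projectivization

section

variable {K V : Type*} [Field K] [AddCommGroup V] [Module K V]

theorem submodule_map_subtype_le (W : Submodule K V) (x : ℙ K W) :
    (map W.subtype W.injective_subtype x).submodule ≤ W := by
  induction x using ind with
  | h v hv => simp [map_mk, submodule_mk, Submodule.span_singleton_le_iff_mem]

theorem natCard_subtype_submodule_le (W : Submodule K V) :
    Nat.card {p : ℙ K V // p.submodule ≤ W} = Nat.card (ℙ K W) := by
  refine (Nat.card_eq_of_bijective (fun x => ⟨_, submodule_map_subtype_le W x⟩)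
    ⟨?_, ?_⟩).symm
  · intro x y h
    exact map_injective _ W.injective_subtype (congrArg Subtype.val h)
  · rintro ⟨p, hp⟩
    induction p using ind with
    | h v hv =>
      rw [submodule_mk, Submodule.span_singleton_le_iff_mem] at hp
      exact ⟨mk K ⟨v, hp⟩ (by simpa using hv),
        Subtype.ext (map_mk _ W.injective_subtype _ _)⟩

variable (K V) in
def Line := {W : Submodule K V // finrank K W = 2}

instance : Membership (ℙ K V) (Line K V) := ⟨fun l p => p.submodule ≤ l.1⟩

theorem mem_line_iff {p : ℙ K V} {l : Line K V} : p ∈ l ↔ p.submodule ≤ l.1 := Iff.rfl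

instance [Finite V] : Finite (Line K V) := Subtype.finite

theorem Line.exists_notMem (hV : finrank K V = 3) (l : Line K V) : ∃ p : ℙ K V, p ∉ l := by
  have hl : l.1 ≠ ⊤ := fun h => by
    have := l.2
    rw [h, finrank_top, hV] at this
    omega
  obtain ⟨v, -, hv⟩ := SetLike.exists_of_lt (lt_top_iff_ne_top.2 hl)
  have hv0 : v ≠ 0 := fun h => hv (h ▸ l.1.zero_mem)
  exact ⟨mk K v hv0, by rwa [mem_line_iff, submodule_mk, Submodule.span_singleton_le_iff_mem]⟩

variable [FiniteDimensional K V]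

theorem finrank_submodule_sup {p q : ℙ K V} (hpq : p ≠ q) :
    finrank K ↥(p.submodule ⊔ q.submodule) = 2 := by
  have hlt := Submodule.finrank_inf_lt_of_ne (submodule_injective.ne hpq)
    (p.finrank_submodule.trans q.finrank_submodule.symm)
  have hsum := Submodule.finrank_sup_add_finrank_inf_eq p.submodule q.submodule
  simp only [finrank_submodule] at hsum hlt
  omega

theorem Line.val_eq_sup {l : Line K V} {p q : ℙ K V} (hpq : p ≠ q) (hp : p ∈ l)
    (hq : q ∈ l) : l.1 = p.submodule ⊔ q.submodule :=
  (Submodule.eq_of_le_of_finrank_eq (sup_le hp hq) (by rw [finrank_submodule_sup hpq, l.2])).symm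

theorem Line.eq_of_mem_of_mem {p q : ℙ K V} {l m : Line K V} (hpq : p ≠ q)
    (hpl : p ∈ l) (hql : q ∈ l) (hpm : p ∈ m) (hqm : q ∈ m) : l = m :=
  Subtype.ext ((val_eq_sup hpq hpl hql).trans (val_eq_sup hpq hpm hqm).symm)

theorem exists_line_notMem (hV : finrank K V = 3) (p : ℙ K V) : ∃ l : Line K V, p ∉ l := by
  obtain ⟨C, hC⟩ := p.submodule.exists_isCompl
  have hC2 : finrank K C = 2 := by
    have := Submodule.finrank_add_eq_of_isCompl hC
    rw [finrank_submodule, hV] at this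
    omega
  refine ⟨⟨C, hC2⟩, fun hp => ?_⟩
  have := p.finrank_submodule
  rw [hC.disjoint.eq_bot_of_le hp, finrank_bot] at this
  exact zero_ne_one this

end

open Configuration

variable {K : Type*} [Field K]

instance : Nondegenerate (ℙ K (Fin 3 → K)) (Line K (Fin 3 → K)) where
  exists_point := Line.exists_notMem (finrank_fin_fun K)
  exists_line := exists_line_notMem (finrank_fin_fun K)
  eq_or_eq hpl hql hpm hqm :=
    or_iff_not_imp_left.2 fun hpq => Line.eq_of_mem_of_mem hpq hpl hql hpm hqm

noncomputable instance : HasLines (ℙ K (Fin 3 → K)) (Line K (Fin 3 → K)) where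
  mkLine {p q} hpq := ⟨p.submodule ⊔ q.submodule, finrank_submodule_sup hpq⟩
  mkLine_ax _ := ⟨le_sup_left, le_sup_right⟩

noncomputable instance : HasPoints (ℙ K (Fin 3 → K)) (Line K (Fin 3 → K)) where
  mkPoint {l m} hlm := mk'' (l.1 ⊓ m.1)
    (Submodule.finrank_inf_eq_one_of_finrank_eq_two (finrank_fin_fun K) l.2 m.2
      (Subtype.val_injective.ne hlm))
  mkPoint_ax _ := by
    simp only [mem_line_iff, submodule_mk'']
    exact ⟨inf_le_left, inf_le_right⟩

theorem pointCount_line [Finite K] (l : Line K (Fin 3 → K)) :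
    pointCount (ℙ K (Fin 3 → K)) l = Nat.card K + 1 :=
  (natCard_subtype_submodule_le l.1).trans (card_of_finrank_two K l.1 l.2)

end Projectivization

namespace Configuration

open Finset

variable {P L : Type*} [Membership P L]

theorem lineCount_eq_of_forall_pointCount_eq [HasPoints P L] [HasLines P L] [Finite P]
    [Finite L] {n : ℕ} (h : ∀ l : L, pointCount P l = n) (p : P) : lineCount L p = n := by
  obtain ⟨l, hl⟩ := Nondegenerate.exists_line (L := L) p
  rw [← h l]
  exact le_antisymm (HasPoints.lineCount_le_pointCount hl) (HasLines.pointCount_le_lineCount hl)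

section Finite

variable [∀ (p : P) (l : L), Decidable (p ∈ l)]

theorem pointCount_eq_card [Fintype P] (l : L) : pointCount P l = #{p | p ∈ l} := by
  rw [pointCount, Nat.card_eq_fintype_card, Fintype.card_subtype]

theorem lineCount_eq_card [Fintype L] (p : P) : lineCount L p = #{l : L | p ∈ l} := by
  rw [lineCount, Nat.card_eq_fintype_card, Fintype.card_subtype]

theorem sum_card_filter_mem_sub_one [HasLines P L] [Fintype L] [DecidableEq P] (S : Finset P)
    {p : P} (hp : p ∈ S) : ∑ l ∈ {l : L | p ∈ l}, (#{q ∈ S | q ∈ l} - 1) = #S - 1 := by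
  have hcover :
      S.erase p = ({l : L | p ∈ l} : Finset L).biUnion ({q ∈ S | q ∈ ·}.erase p) := by
    ext q
    simp only [mem_erase, mem_biUnion, mem_filter, mem_univ, true_and]
    refine ⟨fun ⟨hqp, hqS⟩ => ?_, fun ⟨l, _, hqp, hqS, _⟩ => ⟨hqp, hqS⟩⟩
    obtain ⟨hpl, hql⟩ := HasLines.mkLine_ax (L := L) (Ne.symm hqp)
    exact ⟨_, hpl, hqp, hqS, hql⟩
  have hdisj : (({l : L | p ∈ l} : Finset L) : Set L).PairwiseDisjoint
      ({q ∈ S | q ∈ ·}.erase p) := by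
    intro l hl m hm hlm
    simp only [mem_coe, mem_filter, mem_univ, true_and] at hl hm
    refine disjoint_left.2 fun q hql hqm => ?_
    simp only [mem_erase, mem_filter] at hql hqm
    exact hlm ((Nondegenerate.eq_or_eq hql.2.2 hl hqm.2.2 hm).resolve_left hql.1)
  rw [← card_erase_of_mem hp, hcover, card_biUnion hdisj]
  refine sum_congr rfl fun l hl => ?_
  rw [card_erase_of_mem (mem_filter.2 ⟨hp, (mem_filter.1 hl).2⟩)]

theorem two_le_card_filter_mem [DecidableEq P] {S : Finset P} {l : L}
    (htan : ¬∃! p, p ∈ S ∧ p ∈ l) {p : P} (hpS : p ∈ S) (hpl : p ∈ l) :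
    2 ≤ #{q ∈ S | q ∈ l} := by
  obtain ⟨q, ⟨hqS, hql⟩, hqp⟩ : ∃ q, (q ∈ S ∧ q ∈ l) ∧ q ≠ p := by
    by_contra! h
    exact htan ⟨p, ⟨hpS, hpl⟩, h⟩
  calc 2 = #{q, p} := (card_pair hqp).symm
    _ ≤ #{q ∈ S | q ∈ l} := card_le_card <| by
      intro x hx
      rcases mem_insert.1 hx with rfl | hx
      · exact mem_filter.2 ⟨hqS, hql⟩
      · exact mem_filter.2 (mem_singleton.1 hx ▸ ⟨hpS, hpl⟩)

theorem mem_or_eq_of_pointCount_eq_card_add_one [Fintype P] [DecidableEq P] {S : Finset P}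
    {l : L} (hl : pointCount P l = #{q ∈ S | q ∈ l} + 1) {r : P} (hrl : r ∈ l) (hrS : r ∉ S)
    {x : P} (hxl : x ∈ l) : x ∈ S ∨ x = r := by
  have hsub : insert r {q ∈ S | q ∈ l} ⊆ ({q | q ∈ l} : Finset P) := by
    intro y hy
    rcases mem_insert.1 hy with rfl | hy
    · exact mem_filter.2 ⟨mem_univ _, hrl⟩
    · exact mem_filter.2 ⟨mem_univ _, (mem_filter.1 hy).2⟩
  have hrS' : r ∉ {q ∈ S | q ∈ l} := fun h => hrS (mem_filter.1 h).1
  have heq := eq_of_subset_of_card_le hsub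
    (by rw [← pointCount_eq_card, hl, card_insert_of_notMem hrS'])
  have hx : x ∈ insert r {q ∈ S | q ∈ l} := heq ▸ mem_filter.2 ⟨mem_univ _, hxl⟩
  rcases mem_insert.1 hx with h | h
  · exact Or.inr h
  · exact Or.inl (mem_filter.1 h).1

end Finite

section OrderThree

variable [HasPoints P L] [HasLines P L]

theorem existsUnique_card_filter_mem_eq_three [Fintype P] [Fintype L] [DecidableEq P]
    [∀ (p : P) (l : L), Decidable (p ∈ l)] (hcount : ∀ l : L, pointCount P l = 4)
    {S : Finset P} (hS : #S = 6) (htan : ∀ l : L, ¬∃! p, p ∈ S ∧ p ∈ l) {p : P}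
    (hp : p ∈ S) : ∃! l : L, p ∈ l ∧ #{q ∈ S | q ∈ l} = 3 := by
  have hlines : #({l : L | p ∈ l} : Finset L) = 4 := by
    rw [← lineCount_eq_card, lineCount_eq_of_forall_pointCount_eq hcount]
  have htwo : ∀ l ∈ ({l : L | p ∈ l} : Finset L), 2 ≤ #{q ∈ S | q ∈ l} :=
    fun l hl => two_le_card_filter_mem (htan l) hp (mem_filter.1 hl).2
  have hexcess : ∑ l ∈ {l : L | p ∈ l}, (#{q ∈ S | q ∈ l} - 2) = 1 := by
    have hsum := sum_card_filter_mem_sub_one (L := L) S hp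
    have hshift : ∑ l ∈ {l : L | p ∈ l}, (#{q ∈ S | q ∈ l} - 1)
        = ∑ l ∈ {l : L | p ∈ l}, (#{q ∈ S | q ∈ l} - 2)
          + #({l : L | p ∈ l} : Finset L) := by
      rw [card_eq_sum_ones, ← sum_add_distrib]
      exact sum_congr rfl fun l hl => by have := htwo l hl; omega
    omega
  obtain ⟨l, hl, hl0⟩ := exists_ne_zero_of_sum_ne_zero (hexcess.symm ▸ one_ne_zero)
  have hl1 := hexcess ▸ single_le_sum (fun _ _ => Nat.zero_le _) hl
  refine ⟨l, ⟨(mem_filter.1 hl).2, by have := htwo l hl; omega⟩, fun m ⟨hpm, hm⟩ => ?_⟩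
  by_contra hml
  have := hexcess ▸ add_le_sum (f := fun l => #{q ∈ S | q ∈ l} - 2) (fun _ _ => Nat.zero_le _)
    (mem_filter.2 ⟨mem_univ m, hpm⟩) hl hml
  omega

theorem exists_lines_forall_mem_iff_xor [Finite P] [Finite L]
    (hcount : ∀ l : L, pointCount P l = 4) (S : Finset P) (hS : #S = 6)
    (htan : ∀ l : L, ¬∃! p, p ∈ S ∧ p ∈ l) :
    ∃ l₁ l₂ : L, l₁ ≠ l₂ ∧ ∀ x, x ∈ S ↔ Xor (x ∈ l₁) (x ∈ l₂) := by
  classical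
  have := Fintype.ofFinite P
  have := Fintype.ofFinite L
  have hsecant {p : P} (hp : p ∈ S) := existsUnique_card_filter_mem_eq_three hcount hS htan hp
  obtain ⟨p, hp⟩ : S.Nonempty := card_pos.1 (by omega)
  obtain ⟨l₁, ⟨-, hl₁⟩, -⟩ := hsecant hp
  obtain ⟨a, haS, ha⟩ :=
    exists_mem_notMem_of_card_lt_card (s := {q ∈ S | q ∈ l₁}) (t := S) (by omega)
  obtain ⟨l₂, ⟨hal₂, hl₂⟩, -⟩ := hsecant haS
  have hne : l₁ ≠ l₂ := by
    rintro rfl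
    exact ha (mem_filter.2 ⟨haS, hal₂⟩)
  have hdisj : ∀ x ∈ S, x ∈ l₁ → x ∉ l₂ :=
    fun x hx h₁ h₂ => hne ((hsecant hx).unique ⟨h₁, hl₁⟩ ⟨h₂, hl₂⟩)
  have hcover : {q ∈ S | q ∈ l₁} ∪ {q ∈ S | q ∈ l₂} = S := by
    refine eq_of_subset_of_card_le (union_subset (filter_subset _ _) (filter_subset _ _)) ?_
    rw [card_union_of_disjoint (disjoint_filter.2 hdisj), hl₁, hl₂, hS]
  obtain ⟨r, hr₁, hr₂⟩ := (HasPoints.existsUnique_point P L l₁ l₂ hne).exists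
  have hrS : r ∉ S := fun h => hdisj r h hr₁ hr₂
  have hin_S {l m : L} (hl : #{q ∈ S | q ∈ l} = 3) (hrl : r ∈ l) (hrm : r ∈ m) {x : P}
      (hxl : x ∈ l) (hxm : x ∉ m) : x ∈ S := by
    exact (mem_or_eq_of_pointCount_eq_card_add_one (by rw [hcount, hl]) hrl hrS hxl).resolve_right
      fun hxr => hxm (hxr ▸ hrm)
  refine ⟨l₁, l₂, hne, fun x => ⟨fun hx => ?_, ?_⟩⟩
  · by_cases h₁ : x ∈ l₁
    · exact Or.inl ⟨h₁, hdisj x hx h₁⟩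
    · rw [← hcover, mem_union, mem_filter, mem_filter] at hx
      exact Or.inr ⟨(hx.resolve_left fun h => h₁ h.2).2, h₁⟩
  · rintro (⟨h₁, h₂⟩ | ⟨h₂, h₁⟩)
    · exact hin_S hl₁ hr₁ hr₂ h₁ h₂
    · exact hin_S hl₂ hr₂ hr₁ h₂ h₁

end OrderThree

end Configuration

/-- every set without tangents of size 6 in `PG(2,3)` is trivial. -/
theorem stmt_6 [Fintype F] (hcard : Fintype.card F = 3)
    (S : Set (PGPoint F)) (hS : NoTangents S) (hsize : S.ncard = 6) :
    IsTrivialSWT S := by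
  have hcount (l : Projectivization.Line F (Fin 3 → F)) :
      Configuration.pointCount (PGPoint F) l = 4 := by
    rw [Projectivization.pointCount_line, Nat.card_eq_fintype_card, hcard]
  obtain ⟨l₁, l₂, hne, hmem⟩ := Configuration.exists_lines_forall_mem_iff_xor hcount
    S.toFinite.toFinset (by rwa [← Set.ncard_eq_toFinset_card])
    fun l => by
      simpa only [Set.Finite.mem_toFinset]
        using (show ¬∃! p, p ∈ S ∧ p ∈ l from hS l.1 l.2)
  refine ⟨l₁.1, l₂.1, l₁.2, l₂.2, Subtype.val_injective.ne hne, Set.ext fun x => ?_⟩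
  rw [← S.toFinite.mem_toFinset, hmem x, xor_iff_or_and_not_and]
  rfl
end

section
/- Let q be an odd prime power with q > 5 and let a ∈ F_q with a ≠ 0, a ≠ 1, such that 1−a and a(a−1) are both squares in F_q. Let C1 be the conic of PG(2,q) with equation Z² = XY and C2 the conic with equation Z² = aXY. Then the set of points lying on exactly one of C1 and C2 (their symmetric difference) is a set without tangents in PG(2,q) of size 2(q−1). -/
/-!
`PG(2,F)`: points are the 1-dimensional subspaces of `F^3` (modelled as the
projectivization of `Fin 3 → F`), lines are the 2-dimensional subspaces.
-/

variable {F : Type*} [Field F]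

/-- The conic of `PG(2,F)` with equation `Z² = XY`. -/
def conicZsqXY (F : Type*) [Field F] : Set (PGPoint F) :=
  {P | ∀ v ∈ P.submodule, (v 2) ^ 2 = v 0 * v 1}

/-- The conic of `PG(2,F)` with equation `Z² = aXY`. -/
def conicZsqaXY (F : Type*) [Field F] (a : F) : Set (PGPoint F) :=
  {P | ∀ v ∈ P.submodule, (v 2) ^ 2 = a * (v 0 * v 1)}

/-!
Off their two common points `(1 : 0 : 0)` and `(0 : 1 : 0)`, the conic `Z² = bXY` is the parabola
`s ↦ (1 : s²/b : s)`, `s ≠ 0`, so each half of the symmetric difference is a copy of `Fˣ`.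
Let a line pass through such a point `P = (1 : t²/b : t)`. If it also passes through `(0 : 1 : 0)`,
it meets `Z² = b'XY` in a point off `Z² = bXY`. If it cuts `Z² = bXY` a second time, the second
point lies off `Z² = b'XY` unless it is `(1 : 0 : 0)`, and the line through `(1 : 0 : 0)` and `P`
meets `Z² = b'XY` again. If it is the tangent at `P`, its intersection with `Z² = b'XY` is
given by a quadratic of discriminant `4t²b'(b' - b)`, a square, so it meets that conic as well.
-/

open Projectivization Module
open scoped symmDiff

theorem Submodule.exists_eq_ker_of_finrank_add_one {K V : Type*} [Field K] [AddCommGroup V]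
    [Module K V] [FiniteDimensional K V] (L : Submodule K V) (hL : finrank K L + 1 = finrank K V) :
    ∃ f : V →ₗ[K] K, L = LinearMap.ker f := by
  have hlt : L < ⊤ := lt_top_iff_ne_top.2 fun h => by
    rw [h, finrank_top] at hL; omega
  obtain ⟨f, hf, hLf⟩ := L.exists_le_ker_of_lt_top hlt
  refine ⟨f, Submodule.eq_of_le_of_finrank_le hLf ?_⟩
  have := Submodule.finrank_lt fun h => hf (LinearMap.ker_eq_top.1 h)
  omega

def affinePt (y z : F) : PGPoint F :=
  mk F ![1, y, z] fun h => one_ne_zero (congrFun h 0)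

lemma affinePt_eq_affinePt_iff {y z y' z' : F} :
    affinePt y z = affinePt y' z' ↔ y = y' ∧ z = z' := by
  refine ⟨fun h => ?_, fun ⟨hy, hz⟩ => hy ▸ hz ▸ rfl⟩
  obtain ⟨k, hk⟩ := (mk_eq_mk_iff' F _ _ _ _).1 h
  have h0 := congrFun hk 0
  have h1 := congrFun hk 1
  have h2 := congrFun hk 2
  simp only [Pi.smul_apply, smul_eq_mul, Matrix.cons_val, mul_one] at h0 h1 h2
  subst h0
  simp_all

lemma mk_eq_affinePt {v : Fin 3 → F} (hv : v ≠ 0) (h0 : v 0 ≠ 0) :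
    mk F v hv = affinePt (v 1 / v 0) (v 2 / v 0) := by
  refine (mk_eq_mk_iff' F _ _ _ _).2 ⟨v 0, funext fun i => ?_⟩
  fin_cases i <;> simp [field]

lemma mk_mem_conicZsqaXY_iff {b : F} {v : Fin 3 → F} (hv : v ≠ 0) :
    mk F v hv ∈ conicZsqaXY F b ↔ v 2 ^ 2 = b * (v 0 * v 1) := by
  refine ⟨fun h => h v (by simp [submodule_mk]), fun h w hw => ?_⟩
  obtain ⟨k, rfl⟩ := Submodule.mem_span_singleton.1 (by simpa [submodule_mk] using hw)
  simp only [Pi.smul_apply, smul_eq_mul]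
  linear_combination k ^ 2 * h

lemma affinePt_mem_conicZsqaXY_iff {b y z : F} :
    affinePt y z ∈ conicZsqaXY F b ↔ z ^ 2 = b * y := by
  simp [affinePt, mk_mem_conicZsqaXY_iff]

lemma conicZsqXY_eq_conicZsqaXY_one : conicZsqXY F = conicZsqaXY F 1 := by
  simp [conicZsqXY, conicZsqaXY]

/-- The two conics meet only in `(1 : 0 : 0)` and `(0 : 1 : 0)`. -/
lemma conicZsqaXY_diff_eq_range {b b' : F} (hb : b ≠ 0) (hne : b' ≠ b) :
    conicZsqaXY F b \ conicZsqaXY F b' = Set.range fun s : Fˣ => affinePt ((s : F) ^ 2 / b) s := by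
  refine Set.Subset.antisymm (fun P ⟨hPb, hPb'⟩ => ?_) ?_
  · induction P using Projectivization.ind with
    | h v hv =>
    rw [mk_mem_conicZsqaXY_iff] at hPb hPb'
    have h0 : v 0 ≠ 0 := fun h0 => hPb' (by simp_all)
    have h2 : v 2 ≠ 0 := fun h2 => hPb' (by simp_all)
    refine ⟨Units.mk0 (v 2 / v 0) (div_ne_zero h2 h0), ?_⟩
    rw [mk_eq_affinePt hv h0, affinePt_eq_affinePt_iff]
    refine ⟨?_, rfl⟩
    simp only [Units.val_mk0]
    field_simp
    linear_combination hPb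
  · rintro _ ⟨s, rfl⟩
    simp only [Set.mem_sdiff, affinePt_mem_conicZsqaXY_iff]
    refine ⟨by field_simp, fun h => hne ?_⟩
    field_simp at h
    exact h.symm

lemma ncard_conicZsqaXY_diff [Fintype F] {b b' : F} (hb : b ≠ 0) (hne : b' ≠ b) :
    (conicZsqaXY F b \ conicZsqaXY F b').ncard = Fintype.card F - 1 := by
  rw [conicZsqaXY_diff_eq_range hb hne, Set.ncard_range_of_injective, Nat.card_units,
    Nat.card_eq_fintype_card]
  intro s s' h
  exact Units.ext (affinePt_eq_affinePt_iff.1 h).2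

lemma IsProjLine.exists_coeffs {L : Submodule F (Fin 3 → F)} (hL : IsProjLine F L) :
    ∃ c₀ c₁ c₂ : F, ∀ y z, affinePt y z ∈ pointsOn L ↔ c₀ + c₁ * y + c₂ * z = 0 := by
  obtain ⟨f, rfl⟩ := L.exists_eq_ker_of_finrank_add_one (by rw [hL]; simp)
  refine ⟨f (Pi.single 0 1), f (Pi.single 1 1), f (Pi.single 2 1), fun y z => ?_⟩
  have hsingle (i : Fin 3) : (fun j => if i = j then (1 : F) else 0) = Pi.single i 1 := by
    ext j
    simp [Pi.single_apply, eq_comm]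
  rw [affinePt, pointsOn, Set.mem_ofPred_eq, submodule_mk, Submodule.span_singleton_le_iff_mem,
    LinearMap.mem_ker, LinearMap.pi_apply_eq_sum_univ f, Fin.sum_univ_three]
  simp [hsingle, mul_comm]

lemma exists_root_of_tangent {b b' c₀ c₁ c₂ t : F} (hb : b ≠ 0) (hb' : b' ≠ 0)
    (hsq : IsSquare (b' * (b' - b))) (ht : t ≠ 0) (hc₂ : c₂ * b = -(2 * c₁ * t))
    (hc₀ : c₀ * b = c₁ * t ^ 2) : ∃ u : F, u ≠ 0 ∧ c₀ + c₁ * (u ^ 2 / b') + c₂ * u = 0 := by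
  obtain ⟨r, hr⟩ := hsq
  have hr' : b' + r ≠ 0 := fun h => by
    rw [eq_neg_of_add_eq_zero_right h] at hr
    exact mul_ne_zero hb hb' (by linear_combination -hr)
  -- a root of `b u² - 2b'tu + b't²`, whose discriminant is `4t²b'(b' - b) = (2tr)²`
  refine ⟨t * (b' + r) / b, by positivity, ?_⟩
  field_simp
  linear_combination b' * b * hc₀ + t * b' * (b' + r) * hc₂ - c₁ * t ^ 2 * hr

lemma exists_second_root {b b' c₀ c₁ c₂ t : F} (hb : b ≠ 0) (hb' : b' ≠ 0)
    (hsq : IsSquare (b' * (b' - b))) (ht : t ≠ 0) (hroot : c₀ + c₁ * (t ^ 2 / b) + c₂ * t = 0) :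
    ∃ u : F, u ≠ 0 ∧ ((u ≠ t ∧ c₀ + c₁ * (u ^ 2 / b) + c₂ * u = 0) ∨
      c₀ + c₁ * (u ^ 2 / b') + c₂ * u = 0) := by
  by_cases hc₁ : c₁ = 0
  · exact ⟨t, ht, Or.inr (by simpa [hc₁] using hroot)⟩
  by_cases htt : -(c₂ * b / c₁) - t = t
  · field_simp at hroot htt
    have hc₂ : c₂ * b = -(2 * c₁ * t) := by linear_combination -htt
    obtain ⟨u, hu, hroot_u⟩ := exists_root_of_tangent (c₀ := c₀) hb hb' hsq ht hc₂
      (by linear_combination hroot - t * hc₂)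
    exact ⟨u, hu, Or.inr hroot_u⟩
  by_cases ht0 : -(c₂ * b / c₁) - t = 0
  · refine ⟨t * b' / b, by positivity, Or.inr ?_⟩
    field_simp
    field_simp at hroot ht0
    linear_combination b * hroot - t * (b' - b) * ht0
  -- the second root of `c₁ s² + b c₂ s + b c₀`
  refine ⟨_, ht0, Or.inl ⟨htt, ?_⟩⟩
  field_simp
  field_simp at hroot
  linear_combination c₁ * hroot

lemma exists_ne_mem_symmDiff_inter_pointsOn {b b' : F} (hb : b ≠ 0) (hb' : b' ≠ 0)
    (hne : b' ≠ b) (hsq : IsSquare (b' * (b' - b))) {L : Submodule F (Fin 3 → F)}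
    (hL : IsProjLine F L) {P : PGPoint F} (hP : P ∈ conicZsqaXY F b \ conicZsqaXY F b')
    (hPL : P ∈ pointsOn L) :
    ∃ Q ∈ (conicZsqaXY F b ∆ conicZsqaXY F b') ∩ pointsOn L, Q ≠ P := by
  obtain ⟨c₀, c₁, c₂, hcoeffs⟩ := hL.exists_coeffs
  obtain ⟨t, rfl⟩ : P ∈ Set.range _ := conicZsqaXY_diff_eq_range hb hne ▸ hP
  rw [hcoeffs] at hPL
  obtain ⟨u, hu, ⟨hut, hroot⟩ | hroot⟩ := exists_second_root hb hb' hsq t.ne_zero hPL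
  · have hQ : affinePt (u ^ 2 / b) u ∈ conicZsqaXY F b \ conicZsqaXY F b' :=
      conicZsqaXY_diff_eq_range hb hne ▸ ⟨Units.mk0 u hu, rfl⟩
    exact ⟨_, ⟨Or.inl hQ, (hcoeffs _ _).2 hroot⟩,
      fun h => hut (affinePt_eq_affinePt_iff.1 h).2⟩
  · have hQ : affinePt (u ^ 2 / b') u ∈ conicZsqaXY F b' \ conicZsqaXY F b :=
      conicZsqaXY_diff_eq_range hb' hne.symm ▸ ⟨Units.mk0 u hu, rfl⟩
    exact ⟨_, ⟨Or.inr hQ, (hcoeffs _ _).2 hroot⟩, fun h => hQ.2 (h ▸ hP.1)⟩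

lemma noTangents_symmDiff_conicZsqaXY {b b' : F} (hb : b ≠ 0) (hb' : b' ≠ 0) (hne : b' ≠ b)
    (hsq : IsSquare (b' * (b' - b))) (hsq' : IsSquare (b * (b - b'))) :
    NoTangents (conicZsqaXY F b ∆ conicZsqaXY F b') := by
  rintro L hL ⟨P, ⟨hP | hP, hPL⟩, huniq⟩
  · obtain ⟨Q, hQ, hQP⟩ := exists_ne_mem_symmDiff_inter_pointsOn hb hb' hne hsq hL hP hPL
    exact hQP (huniq Q hQ)
  · obtain ⟨Q, hQ, hQP⟩ := exists_ne_mem_symmDiff_inter_pointsOn hb' hb hne.symm hsq' hL hP hPL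
    exact hQP (huniq Q (symmDiff_comm (α := Set (PGPoint F)) _ _ ▸ hQ))

lemma ncard_symmDiff_conicZsqaXY [Fintype F] {b b' : F} (hb : b ≠ 0) (hb' : b' ≠ 0)
    (hne : b' ≠ b) :
    (conicZsqaXY F b ∆ conicZsqaXY F b').ncard = 2 * (Fintype.card F - 1) := by
  rw [Set.symmDiff_def, Set.ncard_union_eq disjoint_sdiff_sdiff (Set.toFinite _)
    (Set.toFinite _), ncard_conicZsqaXY_diff hb hne, ncard_conicZsqaXY_diff hb' hne.symm, two_mul]

theorem stmt_15_general [Fintype F] (q : ℕ) (hq : Fintype.card F = q)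
    (a : F) (ha0 : a ≠ 0) (ha1 : a ≠ 1)
    (hsq1 : IsSquare (1 - a)) (hsq2 : IsSquare (a * (a - 1))) :
    NoTangents ((conicZsqXY F \ conicZsqaXY F a) ∪ (conicZsqaXY F a \ conicZsqXY F)) ∧
      ((conicZsqXY F \ conicZsqaXY F a) ∪ (conicZsqaXY F a \ conicZsqXY F)).ncard
        = 2 * (q - 1) := by
  rw [conicZsqXY_eq_conicZsqaXY_one, ← Set.symmDiff_def, ← hq]
  exact ⟨noTangents_symmDiff_conicZsqaXY one_ne_zero ha0 ha1 hsq2 (by rwa [one_mul]),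
    ncard_symmDiff_conicZsqaXY one_ne_zero ha0 ha1⟩

/-- for odd `q > 5` and `a ∉ {0,1}` with `1-a` and `a(a-1)` both
squares, the symmetric difference of the conics `Z² = XY` and `Z² = aXY` is a
set without tangents of size `2(q-1)`. -/
theorem stmt_15 [Fintype F] (q : ℕ) (hq : Fintype.card F = q) (hodd : Odd q)
    (h5 : 5 < q) (a : F) (ha0 : a ≠ 0) (ha1 : a ≠ 1)
    (hsq1 : IsSquare (1 - a)) (hsq2 : IsSquare (a * (a - 1))) :
    NoTangents ((conicZsqXY F \ conicZsqaXY F a) ∪ (conicZsqaXY F a \ conicZsqXY F)) ∧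
      ((conicZsqXY F \ conicZsqaXY F a) ∪ (conicZsqaXY F a \ conicZsqXY F)).ncard
        = 2 * (q - 1) :=
  stmt_15_general q hq a ha0 ha1 hsq1 hsq2
end
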